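/- arXiv:2509.07587 — 4 statements merged into one kernel-verified Lean document; each statement's English description precedes it below -/
import Mathlib

section
/- Let a, b ∈ ℝ^d with dist(a,b) = r, and let p, q be any two points lying in the intersection of the closed balls B(a,r) and B(b,r). Then dist(p,q) ≤ √3 · r. -/
open Metric

lemma dist_midpoint_le_aux {d : ℕ} (a b x : EuclideanSpace ℝ (Fin d)) (r : ℝ)
    (hr : 0 ≤ r) (hab : dist a b = r) (h1 : dist x a ≤ r) (h2 : dist x b ≤ r) :
    dist x (midpoint ℝ a b) ≤ Real.sqrt 3 * r / 2 := by
  have hpar := parallelogram_law_with_norm ℝ (x - a) (x - b)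
  have hsum : (x - a) + (x - b) = (2 : ℝ) • (x - midpoint ℝ a b) := by
    rw [midpoint_eq_smul_add, invOf_eq_inv]
    module
  have hdiff : (x - a) - (x - b) = b - a := by abel
  rw [hsum, hdiff, norm_smul] at hpar
  have hna : ‖x - a‖ = dist x a := (dist_eq_norm x a).symm
  have hnb : ‖x - b‖ = dist x b := (dist_eq_norm x b).symm
  have hnm : ‖x - midpoint ℝ a b‖ = dist x (midpoint ℝ a b) := (dist_eq_norm _ _).symm
  have hnba : ‖b - a‖ = r := by rw [← dist_eq_norm, dist_comm, hab]
  rw [hna, hnb, hnm, hnba] at hpar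
  rw [Real.norm_two] at hpar
  have hsq : dist x (midpoint ℝ a b) ^ 2 ≤ (Real.sqrt 3 * r / 2) ^ 2 := by
    have h3 : Real.sqrt 3 ^ 2 = 3 := Real.sq_sqrt (by norm_num)
    have hda : 0 ≤ dist x a := dist_nonneg
    have hdb : 0 ≤ dist x b := dist_nonneg
    nlinarith [hpar]
  calc dist x (midpoint ℝ a b) = Real.sqrt (dist x (midpoint ℝ a b) ^ 2) :=
        (Real.sqrt_sq dist_nonneg).symm
    _ ≤ Real.sqrt ((Real.sqrt 3 * r / 2) ^ 2) := Real.sqrt_le_sqrt hsq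
    _ = Real.sqrt 3 * r / 2 := Real.sqrt_sq (by positivity)

theorem dist_le_sqrt3_of_mem_lens {d : ℕ} (a b p q : EuclideanSpace ℝ (Fin d)) (r : ℝ)
    (hr : 0 ≤ r) (hab : dist a b = r)
    (hp : p ∈ closedBall a r ∩ closedBall b r)
    (hq : q ∈ closedBall a r ∩ closedBall b r) :
    dist p q ≤ Real.sqrt 3 * r := by
  obtain ⟨hpa, hpb⟩ := hp
  obtain ⟨hqa, hqb⟩ := hq
  simp only [mem_closedBall] at hpa hpb hqa hqb
  have h1 := dist_midpoint_le_aux a b p r hr hab hpa hpb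
  have h2 := dist_midpoint_le_aux a b q r hr hab hqa hqb
  calc dist p q ≤ dist p (midpoint ℝ a b) + dist q (midpoint ℝ a b) := dist_triangle_right _ _ _
    _ ≤ Real.sqrt 3 * r / 2 + Real.sqrt 3 * r / 2 := add_le_add h1 h2
    _ = Real.sqrt 3 * r := by ring
end

section
/- For all α ∈ [5π/6, π) and θ ∈ (0, π/6], it holds that sin(α) · tan(θ/2) − cos(α) ≥ 1/√3. -/
theorem sin_tan_sub_cos_ge (α θ : ℝ)
    (hα : α ∈ Set.Ico (5 * Real.pi / 6) Real.pi)
    (hθ : θ ∈ Set.Ioc 0 (Real.pi / 6)) :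
    Real.sin α * Real.tan (θ / 2) - Real.cos α ≥ 1 / Real.sqrt 3 := by
  obtain ⟨hα1, hα2⟩ := hα
  obtain ⟨hθ1, hθ2⟩ := hθ
  have hpi := Real.pi_pos
  have hs : Real.sin α ≥ 0 := by
    apply Real.sin_nonneg_of_nonneg_of_le_pi <;> nlinarith
  have ht : Real.tan (θ / 2) ≥ 0 := by
    rw [Real.tan_eq_sin_div_cos]
    apply div_nonneg
    · apply Real.sin_nonneg_of_nonneg_of_le_pi <;> nlinarith
    · apply le_of_lt; apply Real.cos_pos_of_mem_Ioo
      constructor <;> nlinarith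
  have hc : Real.cos α ≤ -(Real.sqrt 3 / 2) := by
    have h56 : Real.cos (5 * Real.pi / 6) = -(Real.sqrt 3 / 2) := by
      have : (5 : ℝ) * Real.pi / 6 = Real.pi - Real.pi / 6 := by ring
      rw [this, Real.cos_pi_sub, Real.cos_pi_div_six]
    calc Real.cos α ≤ Real.cos (5 * Real.pi / 6) := by
          apply Real.cos_le_cos_of_nonneg_of_le_pi <;> nlinarith
      _ = -(Real.sqrt 3 / 2) := h56
  have h3 : Real.sqrt 3 > 0 := by positivity
  have h3sq : Real.sqrt 3 * Real.sqrt 3 = 3 := Real.mul_self_sqrt (by norm_num)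
  have : (1 : ℝ) / Real.sqrt 3 ≤ Real.sqrt 3 / 2 := by
    rw [div_le_div_iff₀ h3 (by norm_num)]
    nlinarith
  nlinarith [mul_nonneg hs ht]
end

section
/- In the Euclidean plane, let q₂, s, p′, c be points with c on the segment from q₂ to p′, dist(q₂,c) = dist(q₂,s) > 0, and suppose the angle at s in the triangle q₂ s p′ is at least 5π/6. Then dist(s, p′) ≤ √3 · dist(c, p′). -/
open EuclideanGeometry

theorem dist_le_sqrt3_dist_of_large_angle
    (q₂ s p' c : EuclideanSpace ℝ (Fin 2))
    (hseg : c ∈ segment ℝ q₂ p')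
    (hpos : 0 < dist q₂ s)
    (hcs : dist q₂ c = dist q₂ s)
    (hncol : ¬ Collinear ℝ ({q₂, s, p'} : Set (EuclideanSpace ℝ (Fin 2))))
    (hlt : dist q₂ c < dist q₂ p')
    (hangle : ∠ q₂ s p' ≥ 5 * Real.pi / 6) :
    dist s p' ≤ Real.sqrt 3 * dist c p' := by
  have hsum := dist_add_dist_of_mem_segment hseg
  have hlc := EuclideanGeometry.law_cos q₂ s p'
  rw [dist_comm p' s] at hlc
  have hθπ : ∠ q₂ s p' ≤ Real.pi := EuclideanGeometry.angle_le_pi _ _ _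
  have hcos : Real.cos (∠ q₂ s p') ≤ -(Real.sqrt 3 / 2) := by
    have h1 : Real.cos (∠ q₂ s p') ≤ Real.cos (5 * Real.pi / 6) := by
      apply Real.cos_le_cos_of_nonneg_of_le_pi _ hθπ hangle
      positivity
    have h2 : Real.cos (5 * Real.pi / 6) = -(Real.sqrt 3 / 2) := by
      have h3 : (5:ℝ) * Real.pi / 6 = Real.pi - Real.pi / 6 := by ring
      rw [h3, Real.cos_pi_sub, Real.cos_pi_div_six]
    linarith
  have hb : 0 ≤ dist s p' := dist_nonneg
  have ha : 0 ≤ dist q₂ p' := dist_nonneg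
  have hs3 : Real.sqrt 3 ^ 2 = 3 := Real.sq_sqrt (by norm_num)
  have hs3n : 0 ≤ Real.sqrt 3 := Real.sqrt_nonneg 3
  have key : dist q₂ s ^ 2 + dist s p' ^ 2 + Real.sqrt 3 * dist q₂ s * dist s p'
      ≤ dist q₂ p' ^ 2 := by
    nlinarith [mul_nonneg hpos.le hb, mul_le_mul_of_nonneg_left hcos
      (mul_nonneg hpos.le hb)]
  have hcp : dist c p' = dist q₂ p' - dist q₂ s := by linarith
  have hfinal : dist s p' + Real.sqrt 3 * dist q₂ s ≤ Real.sqrt 3 * dist q₂ p' := by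
    nlinarith [sq_nonneg (dist s p' + Real.sqrt 3 * dist q₂ s - Real.sqrt 3 * dist q₂ p'),
      sq_nonneg (dist s p'), mul_nonneg hs3n ha, mul_nonneg hpos.le hb,
      mul_nonneg hs3n (mul_nonneg hpos.le hb)]
  rw [hcp]
  nlinarith
end

section
/- The diameter function on finite subsets of a metric space is 2-almost-smooth: for any three disjoint finite segments A, B, C of points (viewed as finite sets) with diam(A∪B) ≠ 0 and diam(A∪B∪C) ≠ 0, it holds that diam(B) ≤ 2 · diam(A∪B) · diam(B∪C) / diam(A∪B∪C). -/
open Metric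

theorem diam_two_almost_smooth {M : Type*} [MetricSpace M]
    (A B C : Set M) (hA : A.Finite) (hB : B.Finite) (hC : C.Finite)
    (hBne : B.Nonempty)
    (hAB : Disjoint A B) (hBC : Disjoint B C) (hAC : Disjoint A C)
    (hdAB : diam (A ∪ B) ≠ 0) (hdABC : diam (A ∪ B ∪ C) ≠ 0) :
    diam B ≤ 2 * diam (A ∪ B) * diam (B ∪ C) / diam (A ∪ B ∪ C) := by
  have hb1 : Bornology.IsBounded (A ∪ B) := (hA.union hB).isBounded
  have hb2 : Bornology.IsBounded (B ∪ C) := (hB.union hC).isBounded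
  have h1 : diam B ≤ diam (A ∪ B) := diam_mono Set.subset_union_right hb1
  have h2 : diam B ≤ diam (B ∪ C) := diam_mono Set.subset_union_left hb2
  have heq : A ∪ B ∪ C = (A ∪ B) ∪ (B ∪ C) := by
    ext x; simp only [Set.mem_union]; tauto
  have hD : diam (A ∪ B ∪ C) ≤ diam (A ∪ B) + diam (B ∪ C) := by
    rw [heq]
    exact diam_union' (s := A ∪ B) (t := B ∪ C)
      (hBne.mono (Set.subset_inter Set.subset_union_right Set.subset_union_left))
  have hDpos : 0 < diam (A ∪ B ∪ C) := lt_of_le_of_ne diam_nonneg (Ne.symm hdABC)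
  have h1n : 0 ≤ diam (A ∪ B) := diam_nonneg
  have h2n : 0 ≤ diam (B ∪ C) := diam_nonneg
  have hBn : 0 ≤ diam B := diam_nonneg
  rw [le_div_iff₀ hDpos]
  nlinarith [mul_le_mul_of_nonneg_left hD hBn]
end
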